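/- For every positive integer k there exist a constant c > 0 and an integer n₀ such that for all n ≥ n₀ the following holds: for every graph G on n vertices with maximum degree at most c·√n, every locally k-bounded edge colouring of the complete graph K_n contains a copy of G that is properly coloured, i.e., there is an injection σ: V(G) → V(K_n) such that any two edges of G sharing a vertex are mapped by σ to edges of K_n receiving different colours. -/

import Mathlib

/-!
Embed `G` by a uniformly random permutation `π` of `Fin n`. A cherry `y - x - z` of `G` is
badly coloured exactly when `π` maps it onto a monochromatic cherry of `χ`, i.e. when
`π ∘ p = q` for a cherry `p` of `G` and a monochromatic cherry `q`; each such event has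
probability `1 / (n (n-1) (n-2))`. Conditioning on avoiding events whose positions and values
are disjoint from those of `(p, q)` does not raise this probability (a swap argument), and
with degrees at most `D ≤ √n / (24k)` each event conflicts with only `O(D² k n²)` others.
The lopsided local lemma for random permutations (Lu–Székely) then produces a `π` avoiding all
of them.
-/

open Finset Function

namespace ProperlyColouredCopy

section Avoidance

variable {V ι : Type*} [Fintype V] [DecidableEq V] [Fintype ι]

/-- A constraint `e = (p, q)` stands for the event `π ∘ p = q`. -/
def avoiding (J : Finset ((ι → V) × (ι → V))) : Finset (Equiv.Perm V) :=
  {π | ∀ e ∈ J, ⇑π ∘ e.1 ≠ e.2}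

lemma mem_avoiding {J : Finset ((ι → V) × (ι → V))} {π : Equiv.Perm V} :
    π ∈ avoiding J ↔ ∀ e ∈ J, ⇑π ∘ e.1 ≠ e.2 := by
  simp [avoiding]

lemma avoiding_anti {J J' : Finset ((ι → V) × (ι → V))} (h : J ⊆ J') :
    avoiding J' ⊆ avoiding J := fun _ hπ =>
  mem_avoiding.2 fun e he => mem_avoiding.1 hπ e (h he)

def Conflict (e e' : (ι → V) × (ι → V)) : Prop :=
  ∃ i j, e.1 i = e'.1 j ∨ e.2 i = e'.2 j

instance : DecidableRel (Conflict (ι := ι) (V := V)) := fun _ _ =>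
  inferInstanceAs (Decidable (∃ _ _, _))

/-- Swapping the image of `e.1 t` with any position outside `e.1 '' T` turns a permutation that
realizes `e` on `insert t T` into one that realizes `e` on `T`; the position is recovered as the
new preimage of `e.2 t`, and constraints disjoint from `e` stay avoided. -/
lemma card_agreeOn_insert_mul_le [DecidableEq ι] {J : Finset ((ι → V) × (ι → V))}
    {e : (ι → V) × (ι → V)} (hJ : ∀ e' ∈ J, ¬ Conflict e' e) (he : Injective e.1) {t : ι}
    {T : Finset ι} (ht : t ∉ T) :
    #{π ∈ avoiding J | ∀ i ∈ insert t T, π (e.1 i) = e.2 i} * (Fintype.card V - #T) ≤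
      #{π ∈ avoiding J | ∀ i ∈ T, π (e.1 i) = e.2 i} := by
  set x := e.1 t
  have hcard : #(univ \ T.image e.1) = Fintype.card V - #T := by
    rw [card_univ_sdiff, card_image_of_injective _ he]
  rw [← hcard, ← card_product]
  refine card_le_card_of_injOn (fun p => p.1 * Equiv.swap x p.2) ?_ ?_
  · rintro ⟨π, y⟩ hp
    simp only [coe_product, Set.mem_prod, coe_filter, Set.mem_ofPred_eq, mem_coe, mem_sdiff,
      mem_univ, mem_image, true_and, not_exists, not_and] at hp
    obtain ⟨⟨hπ, hπe⟩, hy⟩ := hp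
    have hπx : π x = e.2 t := hπe t (mem_insert_self t T)
    have hfix : ∀ u, u ≠ x → u ≠ y → (π * Equiv.swap x y) u = π u := fun u h1 h2 => by
      rw [Equiv.Perm.mul_apply, Equiv.swap_apply_of_ne_of_ne h1 h2]
    simp only [coe_filter, Set.mem_ofPred_eq, mem_avoiding]
    refine ⟨fun e' he' hreal => mem_avoiding.1 hπ e' he' (funext fun i => ?_), fun i hi => ?_⟩
    · have hx : e'.1 i ≠ x := fun h => hJ e' he' ⟨i, t, .inl h⟩
      have hy' : e'.1 i ≠ y := by
        intro h
        refine hJ e' he' ⟨i, t, .inr ?_⟩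
        rw [← congrFun hreal i, comp_apply, h, Equiv.Perm.mul_apply, Equiv.swap_apply_right, hπx]
      rw [comp_apply, ← hfix _ hx hy', ← comp_apply (f := ⇑(π * _)), hreal]
    · have hit : i ≠ t := by rintro rfl; exact ht hi
      rw [hfix _ (he.ne hit) (fun h => hy i hi h), hπe i (mem_insert_of_mem hi)]
  · rintro ⟨π, y⟩ hp ⟨π', y'⟩ hp' (h : π * Equiv.swap x y = π' * Equiv.swap x y')
    simp only [coe_product, Set.mem_prod, coe_filter, Set.mem_ofPred_eq] at hp hp'
    have hπx : π x = e.2 t := hp.1.2 t (mem_insert_self t T)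
    have hπx' : π' x = e.2 t := hp'.1.2 t (mem_insert_self t T)
    have hyy : y = y' := by
      have hy : (π' * Equiv.swap x y') y = π' x := by
        rw [← h, Equiv.Perm.mul_apply, Equiv.swap_apply_right, hπx, hπx']
      rw [Equiv.Perm.mul_apply, π'.injective.eq_iff, Equiv.swap_apply_eq_iff,
        Equiv.swap_apply_left] at hy
      exact hy
    subst hyy
    exact Prod.ext (mul_right_cancel h) rfl

lemma card_agreeOn_mul_descFactorial_le [DecidableEq ι] {J : Finset ((ι → V) × (ι → V))}
    {e : (ι → V) × (ι → V)} (hJ : ∀ e' ∈ J, ¬ Conflict e' e) (he : Injective e.1)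
    (T : Finset ι) :
    #{π ∈ avoiding J | ∀ i ∈ T, π (e.1 i) = e.2 i} * (Fintype.card V).descFactorial #T ≤
      #(avoiding J) := by
  induction T using Finset.induction_on with
  | empty => simp
  | insert t T ht ih =>
    rw [card_insert_of_notMem ht, Nat.descFactorial_succ, ← mul_assoc]
    exact (Nat.mul_le_mul_right _ (card_agreeOn_insert_mul_le hJ he ht)).trans ih

lemma card_realizing_mul_descFactorial_le {J : Finset ((ι → V) × (ι → V))}
    {e : (ι → V) × (ι → V)} (hJ : ∀ e' ∈ J, ¬ Conflict e' e) (he : Injective e.1) :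
    #{π ∈ avoiding J | ∀ i, π (e.1 i) = e.2 i} * (Fintype.card V).descFactorial (Fintype.card ι) ≤
      #(avoiding J) := by
  classical
  simpa using card_agreeOn_mul_descFactorial_le hJ he univ

lemma card_avoiding_le_add_sum (S T : Finset ((ι → V) × (ι → V))) :
    #(avoiding T) ≤
      #(avoiding (S ∪ T)) + ∑ e ∈ S, #{π ∈ avoiding T | ∀ i, π (e.1 i) = e.2 i} := by
  refine (card_le_card fun π hπ => ?_).trans
    ((card_union_le _ _).trans (by gcongr; exact card_biUnion_le))
  by_cases hST : π ∈ avoiding (S ∪ T)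
  · exact mem_union_left _ hST
  obtain ⟨e, he, hπe⟩ : ∃ e ∈ S ∪ T, ∀ i, π (e.1 i) = e.2 i := by
    simpa [mem_avoiding, funext_iff] using hST
  have heS : e ∈ S := (mem_union.1 he).resolve_right fun heT =>
    mem_avoiding.1 hπ e heT (funext hπe)
  exact mem_union_right _ (mem_biUnion.2 ⟨e, heS, mem_filter.2 ⟨hπ, hπe⟩⟩)

/-- The lopsided local lemma for random permutations: conditioned on avoiding any subfamily of
`J`, a constraint of `J` is realized at most twice as often as unconditionally. -/
lemma card_realizing_mul_descFactorial_le_two_mul {J : Finset ((ι → V) × (ι → V))}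
    (hJ : ∀ e ∈ J, Injective e.1)
    (hdeg : ∀ e₀ ∈ J,
      4 * #{e ∈ J | Conflict e e₀} ≤ (Fintype.card V).descFactorial (Fintype.card ι))
    (S : Finset ((ι → V) × (ι → V))) (hS : S ⊆ J) {e₀ : (ι → V) × (ι → V)} (he₀ : e₀ ∈ J) :
    #{π ∈ avoiding S | ∀ i, π (e₀.1 i) = e₀.2 i} *
        (Fintype.card V).descFactorial (Fintype.card ι) ≤ 2 * #(avoiding S) := by
  set N := (Fintype.card V).descFactorial (Fintype.card ι)
  induction S using Finset.strongInduction generalizing e₀ with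
  | H S ih =>
  set S₁ := {e ∈ S | Conflict e e₀}
  set S₂ := {e ∈ S | ¬ Conflict e e₀}
  have hkey := card_realizing_mul_descFactorial_le (J := S₂) (fun e he => (mem_filter.1 he).2)
    (hJ e₀ he₀)
  have hS₁ : ∀ e ∈ S₁, #{π ∈ avoiding S₂ | ∀ i, π (e.1 i) = e.2 i} * N ≤ 2 * #(avoiding S₂) := by
    intro e he
    have hssub : S₂ ⊂ S :=
      filter_ssubset.2 ⟨e, (mem_filter.1 he).1, not_not.2 (mem_filter.1 he).2⟩
    exact ih S₂ hssub (fun e he => hS (mem_filter.1 he).1) (hS (mem_filter.1 he).1)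
  have hS₁card : 4 * #S₁ ≤ N :=
    (Nat.mul_le_mul_left 4 (card_le_card (filter_subset_filter _ hS))).trans (hdeg e₀ he₀)
  -- as `4 * #S₁ ≤ N`, the union bound over `S₁` costs at most half of `avoiding S₂`
  have hdouble : #(avoiding S₂) * N ≤ 2 * #(avoiding S) * N := by
    have hunion := card_avoiding_le_add_sum S₁ S₂
    rw [filter_union_filter_not_eq] at hunion
    have : #(avoiding S₂) * N ≤ #(avoiding S) * N + #S₁ * (2 * #(avoiding S₂)) := calc
      #(avoiding S₂) * N
          ≤ #(avoiding S) * N + ∑ e ∈ S₁, #{π ∈ avoiding S₂ | ∀ i, π (e.1 i) = e.2 i} * N := by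
        rw [← sum_mul, ← add_mul]
        gcongr
      _ ≤ #(avoiding S) * N + #S₁ * (2 * #(avoiding S₂)) := by
        grw [sum_le_sum hS₁, sum_const, smul_eq_mul]
    nlinarith
  rcases Nat.eq_zero_or_pos N with hN | hN
  · simp [hN]
  calc #{π ∈ avoiding S | ∀ i, π (e₀.1 i) = e₀.2 i} * N
      ≤ #{π ∈ avoiding S₂ | ∀ i, π (e₀.1 i) = e₀.2 i} * N := by
        gcongr
        exact avoiding_anti (filter_subset _ _)
    _ ≤ #(avoiding S₂) := hkey
    _ ≤ 2 * #(avoiding S) := le_of_mul_le_mul_right hdouble hN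

theorem exists_perm_avoiding {J : Finset ((ι → V) × (ι → V))} (hJ : ∀ e ∈ J, Injective e.1)
    (hN : 2 < (Fintype.card V).descFactorial (Fintype.card ι))
    (hdeg : ∀ e₀ ∈ J,
      4 * #{e ∈ J | Conflict e e₀} ≤ (Fintype.card V).descFactorial (Fintype.card ι)) :
    ∃ π : Equiv.Perm V, ∀ e ∈ J, ⇑π ∘ e.1 ≠ e.2 := by
  suffices ∀ S ⊆ J, 0 < #(avoiding S) by
    obtain ⟨π, hπ⟩ := card_pos.1 (this J subset_rfl)
    exact ⟨π, mem_avoiding.1 hπ⟩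
  intro S
  induction S using Finset.induction_on with
  | empty => exact fun _ => card_pos.2 ⟨1, by simp [mem_avoiding]⟩
  | insert e S _ ih =>
    intro hS
    have hsplit : avoiding (insert e S) = {π ∈ avoiding S | ¬ ∀ i, π (e.1 i) = e.2 i} := by
      ext π
      simp [mem_avoiding, funext_iff, and_comm]
    have hbad := card_realizing_mul_descFactorial_le_two_mul hJ hdeg S
      ((subset_insert e S).trans hS) (hS (mem_insert_self e S))
    have hsum := card_filter_add_card_filter_not (s := avoiding S)
      fun π : Equiv.Perm V => ∀ i, π (e.1 i) = e.2 i
    have hpos := ih ((subset_insert e S).trans hS)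
    rw [hsplit]
    nlinarith

end Avoidance

section Counting

lemma card_le_mul_of_fibers {α β γ : Type*} [DecidableEq β] {s : Finset α} {t : Finset β}
    (f : α → β) (g : α → γ) (u : β → Finset γ) {A B : ℕ} (hf : ∀ a ∈ s, f a ∈ t)
    (hg : ∀ a ∈ s, g a ∈ u (f a)) (hinj : ∀ a ∈ s, ∀ a' ∈ s, f a = f a' → g a = g a' → a = a')
    (ht : #t ≤ A) (hu : ∀ b ∈ t, #(u b) ≤ B) : #s ≤ A * B := by
  refine (card_le_mul_card_image_of_maps_to hf B fun b hb => ?_).trans ?_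
  · refine (card_le_card_of_injOn g (fun a ha => ?_) (fun a ha a' ha' => ?_)).trans (hu b hb)
    · obtain ⟨has, rfl⟩ := mem_filter.1 ha
      exact hg a has
    · obtain ⟨has, rfl⟩ := mem_filter.1 ha
      obtain ⟨has', hfa'⟩ := mem_filter.1 ha'
      exact hinj a has a' has' hfa'.symm
  · rw [mul_comm]
    gcongr

variable {V ι : Type*} [Fintype V] [DecidableEq V]

lemma card_le_of_card_filter_apply_le {P : Finset (ι → V)} (i : ι) {A : ℕ}
    (hP : ∀ v, #{p ∈ P | p i = v} ≤ A) : #P ≤ A * Fintype.card V :=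
  card_le_mul_card_image_of_maps_to (f := (· i)) (t := univ) (by simp) A fun v _ => hP v

lemma card_filter_conflict_le [Fintype ι] [Nonempty ι] {P Q : Finset (ι → V)} {A B : ℕ}
    (hP : ∀ i v, #{p ∈ P | p i = v} ≤ A) (hQ : ∀ i w, #{q ∈ Q | q i = w} ≤ B)
    (e₀ : (ι → V) × (ι → V)) :
    #{e ∈ P ×ˢ Q | Conflict e e₀} ≤ 2 * Fintype.card ι ^ 2 * Fintype.card V * A * B := by
  obtain ⟨i₀⟩ := ‹Nonempty ι›
  have hPcard := card_le_of_card_filter_apply_le i₀ (hP i₀)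
  have hQcard := card_le_of_card_filter_apply_le i₀ (hQ i₀)
  have hcover : {e ∈ P ×ˢ Q | Conflict e e₀} ⊆ (univ : Finset (ι × ι)).biUnion fun ij =>
      {p ∈ P | p ij.1 = e₀.1 ij.2} ×ˢ Q ∪ P ×ˢ {q ∈ Q | q ij.1 = e₀.2 ij.2} := by
    rintro ⟨p, q⟩ he
    obtain ⟨hpq, i, j, h⟩ := mem_filter.1 he
    obtain ⟨hp, hq⟩ := mem_product.1 hpq
    simp only [mem_biUnion, mem_univ, true_and, mem_union, mem_product, mem_filter]
    exact ⟨(i, j), h.imp (fun h => ⟨⟨hp, h⟩, hq⟩) fun h => ⟨hp, hq, h⟩⟩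
  calc #{e ∈ P ×ˢ Q | Conflict e e₀}
      ≤ ∑ _ij : ι × ι, (A * (B * Fintype.card V) + A * Fintype.card V * B) := by
        refine (card_le_card hcover).trans (card_biUnion_le.trans (sum_le_sum fun ij _ => ?_))
        refine (card_union_le _ _).trans ?_
        rw [card_product, card_product]
        gcongr
        exacts [hP _ _, hQ _ _]
    _ = 2 * Fintype.card ι ^ 2 * Fintype.card V * A * B := by
        rw [sum_const, card_univ, Fintype.card_prod, smul_eq_mul]
        ring

end Counting

section Cherries

variable {V : Type*} [Fintype V] [DecidableEq V]

lemma fin_three_ext {α : Type*} {p q : Fin 3 → α} (h₀ : p 0 = q 0) (h₁ : p 1 = q 1)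
    (h₂ : p 2 = q 2) : p = q :=
  funext fun i => by fin_cases i <;> assumption

lemma injective_vecCons_three {α : Type*} {a b c : α} (hab : a ≠ b) (hac : a ≠ c)
    (hbc : b ≠ c) : Injective ![a, b, c] := by
  intro i j
  fin_cases i <;> fin_cases j <;> simp [hab, hac, hbc, hab.symm, hac.symm, hbc.symm]

def cherries (G : SimpleGraph V) [DecidableRel G.Adj] : Finset (Fin 3 → V) :=
  {p | Injective p ∧ G.Adj (p 0) (p 1) ∧ G.Adj (p 0) (p 2)}

lemma mem_cherries {G : SimpleGraph V} [DecidableRel G.Adj] {p : Fin 3 → V} :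
    p ∈ cherries G ↔ Injective p ∧ G.Adj (p 0) (p 1) ∧ G.Adj (p 0) (p 2) := by
  simp [cherries]

lemma card_filter_cherries_apply_le {G : SimpleGraph V} [DecidableRel G.Adj] {D : ℕ}
    (hD : ∀ v, G.degree v ≤ D) (i : Fin 3) (v : V) : #{p ∈ cherries G | p i = v} ≤ D * D := by
  simp only [← SimpleGraph.card_neighborFinset_eq_degree] at hD
  fin_cases i <;> simp only [Fin.zero_eta, Fin.mk_one, Fin.reduceFinMk]
  · refine card_le_mul_of_fibers (· 1) (· 2) (fun _ => G.neighborFinset v) ?_ ?_ ?_ (hD v)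
      fun _ _ => hD v <;> simp only [mem_filter, mem_cherries, SimpleGraph.mem_neighborFinset]
    · rintro p ⟨⟨-, h, -⟩, rfl⟩; exact h
    · rintro p ⟨⟨-, -, h⟩, rfl⟩; exact h
    · rintro p ⟨-, h⟩ q ⟨-, h'⟩ h₁ h₂; exact fin_three_ext (h.trans h'.symm) h₁ h₂
  · refine card_le_mul_of_fibers (· 0) (· 2) (fun u => G.neighborFinset u) ?_ ?_ ?_ (hD v)
      fun u _ => hD u <;> simp only [mem_filter, mem_cherries, SimpleGraph.mem_neighborFinset]
    · rintro p ⟨⟨-, h, -⟩, rfl⟩; exact h.symm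
    · rintro p ⟨⟨-, -, h⟩, -⟩; exact h
    · rintro p ⟨-, h⟩ q ⟨-, h'⟩ h₀ h₂; exact fin_three_ext h₀ (h.trans h'.symm) h₂
  · refine card_le_mul_of_fibers (· 0) (· 1) (fun u => G.neighborFinset u) ?_ ?_ ?_ (hD v)
      fun u _ => hD u <;> simp only [mem_filter, mem_cherries, SimpleGraph.mem_neighborFinset]
    · rintro p ⟨⟨-, -, h⟩, rfl⟩; exact h.symm
    · rintro p ⟨⟨-, h, -⟩, -⟩; exact h
    · rintro p ⟨-, h⟩ q ⟨-, h'⟩ h₀ h₁; exact fin_three_ext h₀ h₁ (h.trans h'.symm)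

variable {C : Type*} [DecidableEq C]

def monochromaticCherries (χ : Sym2 V → C) : Finset (Fin 3 → V) :=
  {q | Injective q ∧ χ s(q 0, q 1) = χ s(q 0, q 2)}

lemma mem_monochromaticCherries {χ : Sym2 V → C} {q : Fin 3 → V} :
    q ∈ monochromaticCherries χ ↔ Injective q ∧ χ s(q 0, q 1) = χ s(q 0, q 2) := by
  simp [monochromaticCherries]

lemma card_filter_monochromaticCherries_apply_le {χ : Sym2 V → C} {k : ℕ}
    (hχ : ∀ a c, #{u | u ≠ a ∧ χ s(a, u) = c} ≤ k) (i : Fin 3) (w : V) :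
    #{q ∈ monochromaticCherries χ | q i = w} ≤ Fintype.card V * k := by
  fin_cases i <;> simp only [Fin.zero_eta, Fin.mk_one, Fin.reduceFinMk]
  · refine card_le_mul_of_fibers (· 1) (· 2) (fun b => {u | u ≠ w ∧ χ s(w, u) = χ s(w, b)})
      (t := univ) ?_ ?_ ?_ (card_univ.le) fun _ _ => hχ _ _ <;>
      simp only [mem_filter, mem_monochromaticCherries, mem_univ, true_and]
    · exact fun _ _ => trivial
    · rintro q ⟨⟨hq, h⟩, rfl⟩; exact ⟨hq.ne (by decide), h.symm⟩
    · rintro q ⟨-, h⟩ q' ⟨-, h'⟩ h₁ h₂; exact fin_three_ext (h.trans h'.symm) h₁ h₂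
  · refine card_le_mul_of_fibers (· 0) (· 2) (fun x => {u | u ≠ x ∧ χ s(x, u) = χ s(x, w)})
      (t := univ) ?_ ?_ ?_ (card_univ.le) fun _ _ => hχ _ _ <;>
      simp only [mem_filter, mem_monochromaticCherries, mem_univ, true_and]
    · exact fun _ _ => trivial
    · rintro q ⟨⟨hq, h⟩, rfl⟩; exact ⟨hq.ne (by decide), h.symm⟩
    · rintro q ⟨-, h⟩ q' ⟨-, h'⟩ h₀ h₂; exact fin_three_ext h₀ (h.trans h'.symm) h₂
  · refine card_le_mul_of_fibers (· 0) (· 1) (fun x => {u | u ≠ x ∧ χ s(x, u) = χ s(x, w)})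
      (t := univ) ?_ ?_ ?_ (card_univ.le) fun _ _ => hχ _ _ <;>
      simp only [mem_filter, mem_monochromaticCherries, mem_univ, true_and]
    · exact fun _ _ => trivial
    · rintro q ⟨⟨hq, h⟩, rfl⟩; exact ⟨hq.ne (by decide), h⟩
    · rintro q ⟨-, h⟩ q' ⟨-, h'⟩ h₀ h₁; exact fin_three_ext h₀ h₁ (h.trans h'.symm)

end Cherries

lemma four_mul_conflict_bound_le_descFactorial_three {n k D : ℕ} (hn : 3 ≤ n) (hk : 0 < k)
    (hD : (D : ℝ) ≤ 1 / (24 * k) * √n) :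
    4 * (2 * 3 ^ 2 * n * (D * D) * (n * k)) ≤ n.descFactorial 3 := by
  have hkD : (24 * k * D) ^ 2 ≤ n := by
    have : (24 * k * D : ℝ) ≤ √n := calc
      (24 * k * D : ℝ) ≤ 24 * k * (1 / (24 * k) * √n) := by gcongr
      _ = √n := by field_simp
    exact_mod_cast (Real.le_sqrt (by positivity) (by positivity)).1 this
  obtain ⟨m, rfl⟩ := Nat.exists_eq_add_of_le' hn
  have h : 576 * k * D ^ 2 ≤ m + 3 := le_trans (by nlinarith [Nat.le_self_pow two_ne_zero k]) hkD
  have hfac : (m + 3).descFactorial 3 = (m + 3) * (m + 2) * (m + 1) := by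
    simp [Nat.descFactorial]
    ring
  rw [hfac]
  nlinarith [Nat.mul_le_mul_right ((m + 3) ^ 2) h]

end ProperlyColouredCopy

open ProperlyColouredCopy in
/-- For every positive integer `k` there are `c > 0` and `n₀` such that for all `n ≥ n₀`:
every graph `G` on `n` vertices with maximum degree at most `c·√n` has a properly coloured
copy in every locally `k`-bounded edge colouring of `K_n`. -/
theorem properly_coloured_copy_max_degree_sqrt :
    ∀ k : ℕ, 0 < k → ∃ c : ℝ, 0 < c ∧ ∃ n₀ : ℕ, ∀ n : ℕ, n₀ ≤ n →
      ∀ G : SimpleGraph (Fin n),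
        (∀ v : Fin n, ((G.neighborSet v).ncard : ℝ) ≤ c * Real.sqrt n) →
        ∀ (C : Type) (χ : Sym2 (Fin n) → C),
          (∀ (v : Fin n) (col : C), {u : Fin n | u ≠ v ∧ χ s(v, u) = col}.ncard ≤ k) →
          ∃ σ : Fin n ↪ Fin n, ∀ x y z : Fin n, G.Adj x y → G.Adj x z → y ≠ z →
            χ s(σ x, σ y) ≠ χ s(σ x, σ z) := by
  intro k hk
  refine ⟨1 / (24 * k), by positivity, 3, fun n hn G hdeg C χ hloc => ?_⟩
  classical
  set D := ⌊1 / (24 * k) * √n⌋₊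
  have hGD : ∀ v, G.degree v ≤ D := fun v => Nat.le_floor <| by
    rw [← SimpleGraph.card_neighborFinset_eq_degree, ← Set.ncard_coe_finset,
      SimpleGraph.coe_neighborFinset]
    exact hdeg v
  have hχ : ∀ a c, #{u | u ≠ a ∧ χ s(a, u) = c} ≤ k := fun a c => by
    rw [← Set.ncard_coe_finset, coe_filter_univ]
    exact hloc a c
  have hN : 2 < n.descFactorial 3 :=
    (by decide : 2 < (3).descFactorial 3).trans_le (Nat.descFactorial_le 3 hn)
  obtain ⟨π, hπ⟩ := exists_perm_avoiding (J := cherries G ×ˢ monochromaticCherries χ)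
    (fun e he => (mem_cherries.1 (mem_product.1 he).1).1)
    (by simpa only [Fintype.card_fin] using hN) fun e₀ _ => by
      have hconf := card_filter_conflict_le (card_filter_cherries_apply_le hGD)
        (card_filter_monochromaticCherries_apply_le hχ) e₀
      simp only [Fintype.card_fin] at hconf ⊢
      exact (Nat.mul_le_mul_left 4 hconf).trans
        (four_mul_conflict_bound_le_descFactorial_three hn hk (Nat.floor_le (by positivity)))
  refine ⟨π.toEmbedding, fun x y z hxy hxz hyz hcol => hπ (![x, y, z], π ∘ ![x, y, z]) ?_ rfl⟩
  have hinj := injective_vecCons_three hxy.ne hxz.ne hyz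
  exact mem_product.2 ⟨mem_cherries.2 ⟨hinj, hxy, hxz⟩,
    mem_monochromaticCherries.2 ⟨π.injective.comp hinj, hcol⟩⟩
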